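/- For every n > 5 there exists a partition of the edges of K_n into sets S, T, Z with |Z| = n − 2 such that ∑_{i=1}^n s_i t_i < min(∑_{i=1}^n z_i t_i, ∑_{i=1}^n z_i s_i), where s_i, t_i, z_i are the degrees of vertex v_i in S, T, Z. Hence the condition |Z| = n − 3 in the incidence bound cannot be relaxed to |Z| = n − 2. -/

import Mathlib

/-!
Take three vertices `a b c`. Let `S` be the path `a – b – c`, let `Z` be the edge `ac` together
with the star from `b` to the remaining `n - 3` vertices, and let `T` be everything else. Then
`T` avoids `b` entirely, so `∑ sᵢ tᵢ` only sees `a` and `c` and equals `2(n - 3)`, while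
`∑ zᵢ sᵢ = 2(n - 3) + 2` and `∑ zᵢ tᵢ = 2(n - 3) + (n - 3)(n - 2)`.
-/

open Finset

variable {V : Type*} [DecidableEq V]

def degIn (F : Finset (Sym2 V)) (v : V) : ℕ := #(F.filter fun e => v ∈ e)

lemma degIn_union {F G : Finset (Sym2 V)} (h : Disjoint F G) (v : V) :
    degIn (F ∪ G) v = degIn F v + degIn G v := by
  rw [degIn, filter_union, card_union_of_disjoint (disjoint_filter_filter h), degIn, degIn]

lemma degIn_sdiff {F G : Finset (Sym2 V)} (h : G ⊆ F) (v : V) :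
    degIn (F \ G) v = degIn F v - degIn G v := by
  have := degIn_union (sdiff_disjoint (s := G) (t := F)) v
  rw [sdiff_union_of_subset h] at this
  omega

lemma degIn_insert {F : Finset (Sym2 V)} {e : Sym2 V} (he : e ∉ F) (v : V) :
    degIn (insert e F) v = degIn F v + if v ∈ e then 1 else 0 := by
  rw [insert_eq, union_comm, degIn_union (disjoint_singleton_right.2 he)]
  by_cases hv : v ∈ e <;> simp [degIn, filter_singleton, hv]

lemma degIn_edgeFinset_top [Fintype V] (v : V) :
    degIn (⊤ : SimpleGraph V).edgeFinset v = Fintype.card V - 1 := by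
  rw [degIn, ← SimpleGraph.incidenceFinset_eq_filter, SimpleGraph.card_incidenceFinset_eq_degree,
    SimpleGraph.complete_graph_degree]

def starEdges (c : V) (A : Finset V) : Finset (Sym2 V) := A.image fun x => s(c, x)

section starEdges

variable {c : V} {A : Finset V}

lemma card_starEdges : #(starEdges c A) = #A :=
  card_image_of_injective _ fun _ _ => Sym2.congr_right.1

lemma disjoint_starEdges {B : Finset V} (h : Disjoint A B) :
    Disjoint (starEdges c A) (starEdges c B) :=
  disjoint_image (fun _ _ => Sym2.congr_right.1) |>.2 h

lemma mk_notMem_starEdges {a b : V} (ha : a ≠ c) (hb : b ≠ c) : s(a, b) ∉ starEdges c A := by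
  simp [starEdges, ha.symm, hb.symm]

lemma starEdges_subset_edgeFinset_top [Fintype V] (hc : c ∉ A) :
    starEdges c A ⊆ (⊤ : SimpleGraph V).edgeFinset := by
  simp only [starEdges, subset_iff, mem_image, SimpleGraph.mem_edgeFinset]
  rintro _ ⟨x, hx, rfl⟩
  exact (ne_of_mem_of_not_mem hx hc).symm

lemma degIn_starEdges (v : V) :
    degIn (starEdges c A) v = if v = c then #A else if v ∈ A then 1 else 0 := by
  rw [degIn, starEdges, filter_image, card_image_of_injective _ fun _ _ => Sym2.congr_right.1]
  by_cases hvc : v = c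
  · simp [hvc]
  · simp [Sym2.mem_iff, hvc, filter_eq, apply_ite card]

end starEdges

lemma card_triple {a b c : V} (hab : a ≠ b) (hac : a ≠ c) (hbc : b ≠ c) :
    #({a, b, c} : Finset V) = 3 :=
  card_eq_three.2 ⟨a, b, c, hab, hac, hbc, rfl⟩

lemma sum_eq_of_eq_off_triple [Fintype V] {M : Type*} [AddCommMonoid M] {a b c : V}
    (hab : a ≠ b) (hac : a ≠ c) (hbc : b ≠ c) {f : V → M} {m : M}
    (hf : ∀ v, v ≠ a → v ≠ b → v ≠ c → f v = m) :
    ∑ v, f v = f a + f b + f c + (Fintype.card V - 3) • m := by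
  rw [← sum_sdiff (subset_univ {a, b, c}), sum_insert (by simp [hab, hac]),
    sum_pair hbc, sum_congr rfl fun v hv => hf v (by simp_all) (by simp_all) (by simp_all),
    sum_const, card_univ_sdiff, card_triple hab hac hbc, add_comm]
  ac_rfl

namespace Sharpness

variable (a b c : V)

def S : Finset (Sym2 V) := starEdges b {a, c}

lemma degIn_S {a b c : V} (hac : a ≠ c) (v : V) :
    degIn (S a b c) v = if v = b then 2 else if v = a ∨ v = c then 1 else 0 := by
  simp [S, degIn_starEdges, hac]

def Z [Fintype V] : Finset (Sym2 V) := insert s(a, c) (starEdges b (univ \ {a, b, c}))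

def T [Fintype V] : Finset (Sym2 V) :=
  (⊤ : SimpleGraph V).edgeFinset \ (S a b c ∪ Z a b c)

variable [Fintype V] {a b c}

lemma disjoint_S_Z (hab : a ≠ b) (hbc : b ≠ c) : Disjoint (S a b c) (Z a b c) := by
  refine disjoint_insert_right.2 ⟨mk_notMem_starEdges hab hbc.symm, disjoint_starEdges ?_⟩
  simp [disjoint_left]

lemma S_union_Z_subset (hab : a ≠ b) (hac : a ≠ c) (hbc : b ≠ c) :
    S a b c ∪ Z a b c ⊆ (⊤ : SimpleGraph V).edgeFinset := by
  refine union_subset (starEdges_subset_edgeFinset_top ?_) (insert_subset ?_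
    (starEdges_subset_edgeFinset_top (by simp)))
  · simp [hab.symm, hbc]
  · simpa using hac

lemma card_Z (hab : a ≠ b) (hac : a ≠ c) (hbc : b ≠ c) : #(Z a b c) = Fintype.card V - 2 := by
  have := card_le_univ {a, b, c}
  rw [Z, card_insert_of_notMem (mk_notMem_starEdges hab hbc.symm), card_starEdges,
    card_univ_sdiff, card_triple hab hac hbc] at *
  omega

lemma degIn_Z (hab : a ≠ b) (hac : a ≠ c) (hbc : b ≠ c) (v : V) :
    degIn (Z a b c) v = if v = b then Fintype.card V - 3 else 1 := by
  rw [Z, degIn_insert (mk_notMem_starEdges hab hbc.symm), degIn_starEdges, card_univ_sdiff,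
    card_triple hab hac hbc]
  by_cases hvb : v = b
  · subst hvb; simp [Sym2.mem_iff, hab.symm, hbc]
  · by_cases hva : v = a
    · subst hva; simp [Sym2.mem_iff, hvb]
    · by_cases hvc : v = c
      · subst hvc; simp [Sym2.mem_iff, hvb, hva]
      · simp [Sym2.mem_iff, hvb, hva, hvc]

lemma degIn_T (hab : a ≠ b) (hac : a ≠ c) (hbc : b ≠ c) (v : V) :
    degIn (T a b c) v =
      if v = b then 0 else if v = a ∨ v = c then Fintype.card V - 3 else Fintype.card V - 2 := by
  rw [T, degIn_sdiff (S_union_Z_subset hab hac hbc), degIn_union (disjoint_S_Z hab hbc),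
    degIn_edgeFinset_top, degIn_S hac, degIn_Z hab hac hbc]
  split_ifs <;> omega

lemma sum_degIn_S_mul_T (hab : a ≠ b) (hac : a ≠ c) (hbc : b ≠ c) :
    ∑ v, degIn (S a b c) v * degIn (T a b c) v = 2 * (Fintype.card V - 3) := by
  rw [sum_eq_of_eq_off_triple hab hac hbc (m := 0) fun v hva hvb hvc => by
    simp [degIn_S, degIn_T, *]]
  simp [degIn_S, degIn_T, hab, hac, hbc, hac.symm, hbc.symm, two_mul]

lemma sum_degIn_Z_mul_T (hab : a ≠ b) (hac : a ≠ c) (hbc : b ≠ c) :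
    ∑ v, degIn (Z a b c) v * degIn (T a b c) v =
      2 * (Fintype.card V - 3) + (Fintype.card V - 3) * (Fintype.card V - 2) := by
  rw [sum_eq_of_eq_off_triple hab hac hbc (m := Fintype.card V - 2) fun v hva hvb hvc => by
    simp [degIn_Z, degIn_T, *]]
  simp [degIn_Z, degIn_T, hab, hac, hbc, hac.symm, hbc.symm, two_mul]

lemma sum_degIn_Z_mul_S (hab : a ≠ b) (hac : a ≠ c) (hbc : b ≠ c) :
    ∑ v, degIn (Z a b c) v * degIn (S a b c) v = 2 * (Fintype.card V - 3) + 2 := by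
  rw [sum_eq_of_eq_off_triple hab hac hbc (m := 0) fun v hva hvb hvc => by
    simp [degIn_Z, degIn_S, *]]
  simp only [degIn_Z, degIn_S, hab, hac, hbc, hac.symm, hbc.symm, ne_eq, not_false_eq_true,
    ↓reduceIte, or_false, or_true, mul_one, nsmul_zero, add_zero]
  omega

lemma sum_degIn_S_mul_T_lt_min (hV : 3 < Fintype.card V)
    (hab : a ≠ b) (hac : a ≠ c) (hbc : b ≠ c) :
    ∑ v, degIn (S a b c) v * degIn (T a b c) v <
      min (∑ v, degIn (Z a b c) v * degIn (T a b c) v)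
        (∑ v, degIn (Z a b c) v * degIn (S a b c) v) := by
  rw [sum_degIn_S_mul_T hab hac hbc, sum_degIn_Z_mul_T hab hac hbc,
    sum_degIn_Z_mul_S hab hac hbc, lt_min_iff]
  have : 0 < (Fintype.card V - 3) * (Fintype.card V - 2) := Nat.mul_pos (by omega) (by omega)
  omega

end Sharpness

theorem sharpness (n : ℕ) (hn : 5 < n) :
    ∃ S T Z : Finset (Sym2 (Fin n)),
      S ∪ T ∪ Z = (⊤ : SimpleGraph (Fin n)).edgeFinset ∧
      Disjoint S T ∧ Disjoint S Z ∧ Disjoint T Z ∧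
      Z.card = n - 2 ∧
      (∑ i, (S.filter (fun e => i ∈ e)).card * (T.filter (fun e => i ∈ e)).card <
        min (∑ i, (Z.filter (fun e => i ∈ e)).card * (T.filter (fun e => i ∈ e)).card)
            (∑ i, (Z.filter (fun e => i ∈ e)).card * (S.filter (fun e => i ∈ e)).card)) := by
  obtain ⟨a, b, c, hab, hac, hbc⟩ :=
    (Fintype.two_lt_card_iff (α := Fin n)).1 (by rw [Fintype.card_fin]; omega)
  refine ⟨Sharpness.S a b c, Sharpness.T a b c, Sharpness.Z a b c, ?_, ?_,
    Sharpness.disjoint_S_Z hab hbc, ?_, ?_, ?_⟩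
  · rw [union_right_comm, Sharpness.T,
      union_sdiff_of_subset (Sharpness.S_union_Z_subset hab hac hbc)]
  · exact (disjoint_of_subset_right subset_union_left sdiff_disjoint).symm
  · exact disjoint_of_subset_right subset_union_right sdiff_disjoint
  · rw [Sharpness.card_Z hab hac hbc, Fintype.card_fin]
  · exact Sharpness.sum_degIn_S_mul_T_lt_min (by rw [Fintype.card_fin]; omega) hab hac hbc
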